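/- Let u, v ∈ ℝ⁴ be linearly independent unit spacelike vectors, and let C_u = {x ∈ S² : u₁x₁ + u₂x₂ + u₃x₃ = u₄} and C_v = {x ∈ S² : v₁x₁ + v₂x₂ + v₃x₃ = v₄} be the corresponding circles on the unit sphere S² ⊂ ℝ³. Then: C_u ∩ C_v contains exactly two points if and only if ⟨u,v⟩² < 1; exactly one point if and only if ⟨u,v⟩² = 1; and is empty if and only if ⟨u,v⟩² > 1. Equivalently, the corresponding disks intersect in more than one point exactly when the inversive distance −⟨u,v⟩ lies strictly between −1 and 1. -/
import Mathlib


/-- The Lorentz (Minkowski) inner product on ℝ⁴. -/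
def lor (u v : Fin 4 → ℝ) : ℝ :=
  u 0 * v 0 + u 1 * v 1 + u 2 * v 2 - u 3 * v 3

/-- The unit sphere S² in ℝ³. -/
def sphere2 : Set (Fin 3 → ℝ) :=
  {x | x 0 ^ 2 + x 1 ^ 2 + x 2 ^ 2 = 1}

/-- The circle on S² corresponding to a spacelike vector. -/
def circleOf (n : Fin 4 → ℝ) : Set (Fin 3 → ℝ) :=
  {x ∈ sphere2 | n 0 * x 0 + n 1 * x 1 + n 2 * x 2 = n 3}

set_option maxHeartbeats 10000000

lemma ge_one_aux (X Y D : ℝ) (hD : 0 < D) (h : D*(X - 1) = Y^2) : 1 ≤ X := by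
  nlinarith [sq_nonneg Y]

lemma char_lemma (a b c d e f g k : ℝ)
    (C G N w0 w1 w2 P0 P1 P2 : ℝ)
    (x0 x1 x2 : ℝ)
    (hu : a^2+b^2+c^2 = 1+d^2) (hv : e^2+f^2+g^2 = 1+k^2)
    (hC : C = a*e+b*f+c*g)
    (hG : G = (a^2+b^2+c^2)*(e^2+f^2+g^2) - C^2)
    (hN : N = 1 - (C - d*k)^2)
    (hw0 : w0 = b*g-c*f) (hw1 : w1 = c*e-a*g) (hw2 : w2 = a*f-b*e)
    (hP0 : P0 = ((e^2+f^2+g^2)*d - C*k)*a + ((a^2+b^2+c^2)*k - C*d)*e)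
    (hP1 : P1 = ((e^2+f^2+g^2)*d - C*k)*b + ((a^2+b^2+c^2)*k - C*d)*f)
    (hP2 : P2 = ((e^2+f^2+g^2)*d - C*k)*c + ((a^2+b^2+c^2)*k - C*d)*g)
    (hG0 : G ≠ 0) :
    (x0^2+x1^2+x2^2 = 1 ∧ a*x0+b*x1+c*x2 = d ∧ e*x0+f*x1+g*x2 = k)
    ↔ ∃ Γ : ℝ, Γ^2 = N ∧ G*x0 = P0 + Γ*w0 ∧ G*x1 = P1 + Γ*w1 ∧ G*x2 = P2 + Γ*w2 := by
  subst hC hG hN hw0 hw1 hw2 hP0 hP1 hP2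
  constructor
  · rintro ⟨hs, h1, h2⟩
    refine ⟨(b*g-c*f)*x0+(c*e-a*g)*x1+(a*f-b*e)*x2, ?_, ?_, ?_, ?_⟩
    rotate_left
    · linear_combination ((a*f-b*e)*f-(c*e-a*g)*g)*h1 + ((c*e-a*g)*c-(a*f-b*e)*b)*h2
    · linear_combination ((b*g-c*f)*g-(a*f-b*e)*e)*h1 + ((a*f-b*e)*a-(b*g-c*f)*c)*h2
    · linear_combination ((c*e-a*g)*e-(b*g-c*f)*f)*h1 + ((b*g-c*f)*b-(c*e-a*g)*a)*h2
    · have e0 : ((a^2+b^2+c^2)*(e^2+f^2+g^2) - (a*e+b*f+c*g)^2)*x0 =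
          (((e^2+f^2+g^2)*d - (a*e+b*f+c*g)*k)*a + ((a^2+b^2+c^2)*k - (a*e+b*f+c*g)*d)*e)
          + ((b*g-c*f)*x0+(c*e-a*g)*x1+(a*f-b*e)*x2)*(b*g-c*f) := by
        linear_combination ((a*f-b*e)*f-(c*e-a*g)*g)*h1 + ((c*e-a*g)*c-(a*f-b*e)*b)*h2
      have e1 : ((a^2+b^2+c^2)*(e^2+f^2+g^2) - (a*e+b*f+c*g)^2)*x1 =
          (((e^2+f^2+g^2)*d - (a*e+b*f+c*g)*k)*b + ((a^2+b^2+c^2)*k - (a*e+b*f+c*g)*d)*f)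
          + ((b*g-c*f)*x0+(c*e-a*g)*x1+(a*f-b*e)*x2)*(c*e-a*g) := by
        linear_combination ((b*g-c*f)*g-(a*f-b*e)*e)*h1 + ((a*f-b*e)*a-(b*g-c*f)*c)*h2
      have e2 : ((a^2+b^2+c^2)*(e^2+f^2+g^2) - (a*e+b*f+c*g)^2)*x2 =
          (((e^2+f^2+g^2)*d - (a*e+b*f+c*g)*k)*c + ((a^2+b^2+c^2)*k - (a*e+b*f+c*g)*d)*g)
          + ((b*g-c*f)*x0+(c*e-a*g)*x1+(a*f-b*e)*x2)*(a*f-b*e) := by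
        linear_combination ((c*e-a*g)*e-(b*g-c*f)*f)*h1 + ((b*g-c*f)*b-(c*e-a*g)*a)*h2
      have hGT : ((a^2+b^2+c^2)*(e^2+f^2+g^2) - (a*e+b*f+c*g)^2)
            * (((b*g-c*f)*x0+(c*e-a*g)*x1+(a*f-b*e)*x2)^2)
          = ((a^2+b^2+c^2)*(e^2+f^2+g^2) - (a*e+b*f+c*g)^2)
            * (1 - (a*e+b*f+c*g - d*k)^2) := by
        linear_combination
          ((a^2+b^2+c^2)*(e^2+f^2+g^2) - (a*e+b*f+c*g)^2)^2*hs
          - (((a^2+b^2+c^2)*(e^2+f^2+g^2) - (a*e+b*f+c*g)^2)*x0 + (((e^2+f^2+g^2)*d - (a*e+b*f+c*g)*k)*a + ((a^2+b^2+c^2)*k - (a*e+b*f+c*g)*d)*e) + ((b*g-c*f)*x0+(c*e-a*g)*x1+(a*f-b*e)*x2)*(b*g-c*f))*e0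
          - (((a^2+b^2+c^2)*(e^2+f^2+g^2) - (a*e+b*f+c*g)^2)*x1 + (((e^2+f^2+g^2)*d - (a*e+b*f+c*g)*k)*b + ((a^2+b^2+c^2)*k - (a*e+b*f+c*g)*d)*f) + ((b*g-c*f)*x0+(c*e-a*g)*x1+(a*f-b*e)*x2)*(c*e-a*g))*e1
          - (((a^2+b^2+c^2)*(e^2+f^2+g^2) - (a*e+b*f+c*g)^2)*x2 + (((e^2+f^2+g^2)*d - (a*e+b*f+c*g)*k)*c + ((a^2+b^2+c^2)*k - (a*e+b*f+c*g)*d)*g) + ((b*g-c*f)*x0+(c*e-a*g)*x1+(a*f-b*e)*x2)*(a*f-b*e))*e2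
          - ((e^2+f^2+g^2)*k^2 + (a^2+b^2+c^2)*(e^2+f^2+g^2)*k^2 + (e^2+f^2+g^2)*(a*e+b*f+c*g)^2 - (a*e+b*f+c*g)^2*k^2 + (e^2+f^2+g^2) - (e^2+f^2+g^2)^2 - (a^2+b^2+c^2)*(e^2+f^2+g^2)^2)*hu
          - ((a*e+b*f+c*g)^2 - (e^2+f^2+g^2)*(1+d^2))*hv
      exact mul_left_cancel₀ hG0 hGT
  · rintro ⟨Γ, hΓ, e0, e1, e2⟩
    refine ⟨?_, ?_, ?_⟩
    · have h : ((a^2+b^2+c^2)*(e^2+f^2+g^2) - (a*e+b*f+c*g)^2)^2*(x0^2+x1^2+x2^2)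
          = ((a^2+b^2+c^2)*(e^2+f^2+g^2) - (a*e+b*f+c*g)^2)^2*1 := by
        linear_combination
          (((a^2+b^2+c^2)*(e^2+f^2+g^2) - (a*e+b*f+c*g)^2)*x0 + (((e^2+f^2+g^2)*d - (a*e+b*f+c*g)*k)*a + ((a^2+b^2+c^2)*k - (a*e+b*f+c*g)*d)*e) + Γ*(b*g-c*f))*e0
          + (((a^2+b^2+c^2)*(e^2+f^2+g^2) - (a*e+b*f+c*g)^2)*x1 + (((e^2+f^2+g^2)*d - (a*e+b*f+c*g)*k)*b + ((a^2+b^2+c^2)*k - (a*e+b*f+c*g)*d)*f) + Γ*(c*e-a*g))*e1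
          + (((a^2+b^2+c^2)*(e^2+f^2+g^2) - (a*e+b*f+c*g)^2)*x2 + (((e^2+f^2+g^2)*d - (a*e+b*f+c*g)*k)*c + ((a^2+b^2+c^2)*k - (a*e+b*f+c*g)*d)*g) + Γ*(a*f-b*e))*e2
          + ((b*g-c*f)^2+(c*e-a*g)^2+(a*f-b*e)^2)*hΓ
          + ((e^2+f^2+g^2)*k^2 + (a^2+b^2+c^2)*(e^2+f^2+g^2)*k^2 + (e^2+f^2+g^2)*(a*e+b*f+c*g)^2 - (a*e+b*f+c*g)^2*k^2 + (e^2+f^2+g^2) - (e^2+f^2+g^2)^2 - (a^2+b^2+c^2)*(e^2+f^2+g^2)^2)*hu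
          + ((a*e+b*f+c*g)^2 - (e^2+f^2+g^2)*(1+d^2))*hv
      exact mul_left_cancel₀ (pow_ne_zero 2 hG0) h
    · have h : ((a^2+b^2+c^2)*(e^2+f^2+g^2) - (a*e+b*f+c*g)^2)*(a*x0+b*x1+c*x2)
          = ((a^2+b^2+c^2)*(e^2+f^2+g^2) - (a*e+b*f+c*g)^2)*d := by
        linear_combination a*e0 + b*e1 + c*e2
      exact mul_left_cancel₀ hG0 h
    · have h : ((a^2+b^2+c^2)*(e^2+f^2+g^2) - (a*e+b*f+c*g)^2)*(e*x0+f*x1+g*x2)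
          = ((a^2+b^2+c^2)*(e^2+f^2+g^2) - (a*e+b*f+c*g)^2)*k := by
        linear_combination e*e0 + f*e1 + g*e2
      exact mul_left_cancel₀ hG0 h


lemma pair_li_ne_smul {u v : Fin 4 → ℝ} (hLI : LinearIndependent ℝ ![u, v]) (r : ℝ) :
    v ≠ r • u := by
  intro h
  rw [linearIndependent_fin2] at hLI
  obtain ⟨hv0, hnu⟩ := hLI
  simp only [Matrix.cons_val_zero, Matrix.cons_val_one, Matrix.head_cons] at hv0 hnu
  rcases eq_or_ne r 0 with hr | hr
  · exact hv0 (by rw [h, hr, zero_smul])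
  · exact hnu r⁻¹ (by rw [h, smul_smul, inv_mul_cancel₀ hr, one_smul])

theorem stmt_11 (u v : Fin 4 → ℝ)
    (hu : lor u u = 1) (hv : lor v v = 1)
    (hLI : LinearIndependent ℝ ![u, v]) :
    ((∃ x y : Fin 3 → ℝ, x ≠ y ∧ circleOf u ∩ circleOf v = {x, y}) ↔
        (lor u v) ^ 2 < 1) ∧
    ((∃ x : Fin 3 → ℝ, circleOf u ∩ circleOf v = {x}) ↔ (lor u v) ^ 2 = 1) ∧
    (circleOf u ∩ circleOf v = ∅ ↔ 1 < (lor u v) ^ 2) := by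
  simp only [lor] at hu hv
  have mem_iff : ∀ x : Fin 3 → ℝ, x ∈ circleOf u ∩ circleOf v ↔
      (x 0 ^ 2 + x 1 ^ 2 + x 2 ^ 2 = 1 ∧ u 0 * x 0 + u 1 * x 1 + u 2 * x 2 = u 3 ∧
        v 0 * x 0 + v 1 * x 1 + v 2 * x 2 = v 3) := by
    intro x
    simp only [Set.mem_inter_iff, circleOf, sphere2, Set.mem_setOf_eq, Set.mem_sep_iff]
    tauto
  have hlor : lor u v = u 0 * v 0 + u 1 * v 1 + u 2 * v 2 - u 3 * v 3 := rfl
  set a := u 0 with ha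
  set b := u 1 with hb
  set c := u 2 with hc
  set d := u 3 with hd
  set e := v 0 with he
  set f := v 1 with hf
  set g := v 2 with hg
  set k := v 3 with hk
  have hu' : a^2+b^2+c^2 = 1+d^2 := by linear_combination hu
  have hv' : e^2+f^2+g^2 = 1+k^2 := by linear_combination hv
  set C := a*e+b*f+c*g with hCdef
  set G := (a^2+b^2+c^2)*(e^2+f^2+g^2) - C^2 with hGdef
  set N := 1 - (C - d*k)^2 with hNdef
  set w0 := b*g-c*f with hw0def
  set w1 := c*e-a*g with hw1def
  set w2 := a*f-b*e with hw2def
  set P0 := ((e^2+f^2+g^2)*d - C*k)*a + ((a^2+b^2+c^2)*k - C*d)*e with hP0def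
  set P1 := ((e^2+f^2+g^2)*d - C*k)*b + ((a^2+b^2+c^2)*k - C*d)*f with hP1def
  set P2 := ((e^2+f^2+g^2)*d - C*k)*c + ((a^2+b^2+c^2)*k - C*d)*g with hP2def
  have hNlor : N = 1 - (lor u v)^2 := by rw [hNdef, hlor]
  have h1d : (0:ℝ) < 1 + d^2 := by positivity
  have hGnn : 0 ≤ G := by
    have : G = w0^2 + w1^2 + w2^2 := by
      rw [hGdef, hCdef, hw0def, hw1def, hw2def]; ring
    rw [this]; positivity
  have hcontra : (1+d^2)*k = (a*e+b*f+c*g)*d →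
      ((1+d^2)*e = (a*e+b*f+c*g)*a) → ((1+d^2)*f = (a*e+b*f+c*g)*b) →
      ((1+d^2)*g = (a*e+b*f+c*g)*c) → False := by
    intro r3 r0 r1 r2
    apply pair_li_ne_smul hLI ((a*e+b*f+c*g)/(1+d^2))
    funext i
    fin_cases i
    · show v 0 = (a*e+b*f+c*g)/(1+d^2) * u 0
      rw [← ha, ← he, div_mul_eq_mul_div, eq_div_iff (ne_of_gt h1d)]
      linear_combination r0
    · show v 1 = (a*e+b*f+c*g)/(1+d^2) * u 1
      rw [← hb, ← hf, div_mul_eq_mul_div, eq_div_iff (ne_of_gt h1d)]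
      linear_combination r1
    · show v 2 = (a*e+b*f+c*g)/(1+d^2) * u 2
      rw [← hc, ← hg, div_mul_eq_mul_div, eq_div_iff (ne_of_gt h1d)]
      linear_combination r2
    · show v 3 = (a*e+b*f+c*g)/(1+d^2) * u 3
      rw [← hd, ← hk, div_mul_eq_mul_div, eq_div_iff (ne_of_gt h1d)]
      linear_combination r3
  have main : (1 < (lor u v)^2 ∧ circleOf u ∩ circleOf v = ∅) ∨
      ((lor u v)^2 = 1 ∧ ∃ X : Fin 3 → ℝ, circleOf u ∩ circleOf v = {X}) ∨
      ((lor u v)^2 < 1 ∧ ∃ X Y : Fin 3 → ℝ, X ≠ Y ∧ circleOf u ∩ circleOf v = {X, Y}) := by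
    rcases eq_or_lt_of_le hGnn with hGzero | hGpos
    · -- parallel case: G = 0
      left
      have hABC : (0:ℝ) = (a^2+b^2+c^2)*(e^2+f^2+g^2) - (a*e+b*f+c*g)^2 := by
        rw [hGzero, hGdef, hCdef]
      have hCsq : (a*e+b*f+c*g)^2 = (1+d^2)*(1+k^2) := by
        linear_combination hABC + (e^2+f^2+g^2)*hu' + (1+d^2)*hv'
      have hwsum : (b*g-c*f)^2 + (c*e-a*g)^2 + (a*f-b*e)^2 = 0 := by
        linear_combination -hABC
      have hz0 : b*g-c*f = 0 := by
        have h2 : (b*g-c*f)^2 = 0 :=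
          le_antisymm (by linarith only [hwsum, sq_nonneg (c*e-a*g), sq_nonneg (a*f-b*e)]) (by positivity)
        exact (pow_eq_zero_iff two_ne_zero).mp h2
      have hz1 : c*e-a*g = 0 := by
        have h2 : (c*e-a*g)^2 = 0 :=
          le_antisymm (by linarith only [hwsum, sq_nonneg (b*g-c*f), sq_nonneg (a*f-b*e)]) (by positivity)
        exact (pow_eq_zero_iff two_ne_zero).mp h2
      have hz2 : a*f-b*e = 0 := by
        have h2 : (a*f-b*e)^2 = 0 :=
          le_antisymm (by linarith only [hwsum, sq_nonneg (b*g-c*f), sq_nonneg (c*e-a*g)]) (by positivity)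
        exact (pow_eq_zero_iff two_ne_zero).mp h2
      have r0 : (1+d^2)*e = (a*e+b*f+c*g)*a := by
        linear_combination -e*hu' - b*hz2 + c*hz1
      have r1 : (1+d^2)*f = (a*e+b*f+c*g)*b := by
        linear_combination -f*hu' + a*hz2 - c*hz0
      have r2 : (1+d^2)*g = (a*e+b*f+c*g)*c := by
        linear_combination -g*hu' - a*hz1 + b*hz0
      have hkey : (1+d^2)*((a*e+b*f+c*g - d*k)^2 - 1) = ((a*e+b*f+c*g)*d - (1+d^2)*k)^2 := by
        linear_combination hCsq
      have hLC : lor u v = a*e+b*f+c*g - d*k := by rw [hlor, hCdef]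
      constructor
      · -- 1 < L²
        have hge : 1 ≤ (lor u v)^2 := by
          rw [hLC]
          exact ge_one_aux _ _ _ h1d hkey
        rcases eq_or_lt_of_le hge with heq | hlt
        · exfalso
          have heq' : (a*e+b*f+c*g - d*k)^2 = 1 := by rw [← hLC]; linarith only [heq]
          have hsq0 : ((a*e+b*f+c*g)*d - (1+d^2)*k)^2 = 0 := by
            linear_combination -hkey + (1+d^2)*heq'
          have r3 : (1+d^2)*k = (a*e+b*f+c*g)*d := by
            have hpz := (pow_eq_zero_iff two_ne_zero).mp hsq0
            linarith only [hpz]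
          exact hcontra r3 r0 r1 r2
        · exact hlt
      · -- empty
        apply Set.eq_empty_iff_forall_notMem.mpr
        intro x hx
        obtain ⟨hs, h1, h2⟩ := (mem_iff x).mp hx
        have r3 : (1+d^2)*k = (a*e+b*f+c*g)*d := by
          linear_combination (x 0)*r0 + (x 1)*r1 + (x 2)*r2 - (1+d^2)*h2 + (a*e+b*f+c*g)*h1
        exact hcontra r3 r0 r1 r2
    · -- nondegenerate case: G > 0
      have hG0' : G ≠ 0 := ne_of_gt hGpos
      have char : ∀ x : Fin 3 → ℝ, x ∈ circleOf u ∩ circleOf v ↔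
          ∃ Γ : ℝ, Γ^2 = N ∧ G*(x 0) = P0 + Γ*w0 ∧ G*(x 1) = P1 + Γ*w1 ∧ G*(x 2) = P2 + Γ*w2 := by
        intro x
        rw [mem_iff x]
        exact char_lemma a b c d e f g k C G N w0 w1 w2 P0 P1 P2 (x 0) (x 1) (x 2)
          hu' hv' hCdef hGdef hNdef hw0def hw1def hw2def hP0def hP1def hP2def hG0'
      have ptmem : ∀ (x : Fin 3 → ℝ) (Γ : ℝ),
          (G*(x 0) = P0 + Γ*w0 ∧ G*(x 1) = P1 + Γ*w1 ∧ G*(x 2) = P2 + Γ*w2) ↔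
            x = ![(P0+Γ*w0)/G, (P1+Γ*w1)/G, (P2+Γ*w2)/G] := by
        intro x Γ
        constructor
        · rintro ⟨e0, e1, e2⟩
          funext i
          fin_cases i
          · show x 0 = (P0+Γ*w0)/G
            rw [eq_div_iff hG0']; linear_combination e0
          · show x 1 = (P1+Γ*w1)/G
            rw [eq_div_iff hG0']; linear_combination e1
          · show x 2 = (P2+Γ*w2)/G
            rw [eq_div_iff hG0']; linear_combination e2
        · rintro rfl
          refine ⟨?_, ?_, ?_⟩ <;>
            simp only [Matrix.cons_val_zero, Matrix.cons_val_one, Matrix.head_cons,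
              Matrix.cons_val_two, Matrix.tail_cons] <;>
            field_simp
      rcases lt_trichotomy N 0 with hN | hN | hN
      · left
        constructor
        · linarith only [hN, hNlor]
        · apply Set.eq_empty_iff_forall_notMem.mpr
          intro x hx
          obtain ⟨Γ, hΓ, -⟩ := (char x).mp hx
          linarith only [hΓ, hN, sq_nonneg Γ]
      · right; left
        constructor
        · linarith only [hN, hNlor]
        · refine ⟨![(P0+(0:ℝ)*w0)/G, (P1+(0:ℝ)*w1)/G, (P2+(0:ℝ)*w2)/G], ?_⟩
          ext x
          rw [char x, Set.mem_singleton_iff]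
          constructor
          · rintro ⟨Γ, hΓ, he⟩
            have hΓ0 : Γ = 0 := by
              apply (pow_eq_zero_iff two_ne_zero).mp
              rw [hΓ, hN]
            subst hΓ0
            exact (ptmem x 0).mp he
          · intro hx
            exact ⟨0, by rw [hN]; norm_num, (ptmem x 0).mpr hx⟩
      · right; right
        constructor
        · linarith only [hN, hNlor]
        · obtain ⟨sq, hsq2, hsqpos⟩ : ∃ s : ℝ, s^2 = N ∧ 0 < s :=
            ⟨Real.sqrt N, Real.sq_sqrt hN.le, Real.sqrt_pos.mpr hN⟩
          refine ⟨![(P0+sq*w0)/G, (P1+sq*w1)/G, (P2+sq*w2)/G],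
            ![(P0+(-sq)*w0)/G, (P1+(-sq)*w1)/G, (P2+(-sq)*w2)/G], ?_, ?_⟩
          · -- distinct
            have hws : w0^2+w1^2+w2^2 = G := by
              rw [hGdef, hCdef, hw0def, hw1def, hw2def]; ring
            intro heq
            have coord : ∀ (Pi wi : ℝ), (Pi+sq*wi)/G = (Pi+(-sq)*wi)/G → wi = 0 := by
              intro Pi wi hcc
              rw [div_eq_div_iff hG0' hG0'] at hcc
              have h' := mul_right_cancel₀ hG0' hcc
              have h'' : sq * wi = 0 := by linarith only [h']
              rcases mul_eq_zero.mp h'' with h | h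
              · exact absurd h (ne_of_gt hsqpos)
              · exact h
            have c0 := coord P0 w0 (by simpa using congrFun heq 0)
            have c1 := coord P1 w1 (by simpa using congrFun heq 1)
            have c2 := coord P2 w2 (by simpa using congrFun heq 2)
            rw [c0, c1, c2] at hws
            norm_num at hws
            exact absurd hws.symm (ne_of_gt hGpos)
          · ext x
            rw [char x, Set.mem_insert_iff, Set.mem_singleton_iff]
            constructor
            · rintro ⟨Γ, hΓ, he⟩
              have hfac : (Γ - sq)*(Γ + sq) = 0 := by linear_combination hΓ - hsq2
              rcases mul_eq_zero.mp hfac with h | h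
              · left
                have hΓs : Γ = sq := by linarith only [h]
                rw [hΓs] at he
                exact (ptmem x sq).mp he
              · right
                have hΓs : Γ = -sq := by linarith only [h]
                rw [hΓs] at he
                exact (ptmem x (-sq)).mp he
            · rintro (rfl | rfl)
              · exact ⟨sq, hsq2, (ptmem _ sq).mpr rfl⟩
              · exact ⟨-sq, by rw [neg_pow]; simpa using hsq2, (ptmem _ (-sq)).mpr rfl⟩
  have fact_lt : (lor u v)^2 < 1 → ∃ X Y : Fin 3 → ℝ, X ≠ Y ∧ circleOf u ∩ circleOf v = {X, Y} := by
    intro h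
    rcases main with ⟨h1, -⟩ | ⟨h1, -⟩ | ⟨-, h2⟩
    · linarith only [h, h1]
    · linarith only [h, h1]
    · exact h2
  have fact_eq : (lor u v)^2 = 1 → ∃ X : Fin 3 → ℝ, circleOf u ∩ circleOf v = {X} := by
    intro h
    rcases main with ⟨h1, -⟩ | ⟨-, h2⟩ | ⟨h1, -⟩
    · linarith only [h, h1]
    · exact h2
    · linarith only [h, h1]
  have fact_gt : 1 < (lor u v)^2 → circleOf u ∩ circleOf v = ∅ := by
    intro h
    rcases main with ⟨-, h2⟩ | ⟨h1, -⟩ | ⟨h1, -⟩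
    · exact h2
    · linarith only [h, h1]
    · linarith only [h, h1]
  clear mem_iff
  refine ⟨⟨?_, fact_lt⟩, ⟨?_, fact_eq⟩, ⟨?_, fact_gt⟩⟩
  · rintro ⟨X, Y, hne, hS⟩
    rcases lt_trichotomy ((lor u v)^2) 1 with h | h | h
    · exact h
    · obtain ⟨Z, hZ⟩ := fact_eq h
      have hX : X = Z := by
        have : X ∈ ({Z} : Set (Fin 3 → ℝ)) := by rw [← hZ, hS]; exact Set.mem_insert _ _
        simpa using this
      have hY : Y = Z := by
        have : Y ∈ ({Z} : Set (Fin 3 → ℝ)) := by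
          rw [← hZ, hS]; exact Set.mem_insert_iff.mpr (Or.inr rfl)
        simpa using this
      exact absurd (hX.trans hY.symm) hne
    · have hE := fact_gt h
      have : X ∈ (∅ : Set (Fin 3 → ℝ)) := by rw [← hE, hS]; exact Set.mem_insert _ _
      simpa using this
  · rintro ⟨X, hS⟩
    rcases lt_trichotomy ((lor u v)^2) 1 with h | h | h
    · obtain ⟨Y, Z, hne, hYZ⟩ := fact_lt h
      have hY : Y = X := by
        have : Y ∈ ({X} : Set (Fin 3 → ℝ)) := by rw [← hS, hYZ]; exact Set.mem_insert _ _
        simpa using this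
      have hZ : Z = X := by
        have : Z ∈ ({X} : Set (Fin 3 → ℝ)) := by
          rw [← hS, hYZ]; exact Set.mem_insert_iff.mpr (Or.inr rfl)
        simpa using this
      exact absurd (hY.trans hZ.symm) hne
    · exact h
    · have hE := fact_gt h
      have : X ∈ (∅ : Set (Fin 3 → ℝ)) := by rw [← hE, hS]; exact rfl
      simpa using this
  · intro hE
    rcases lt_trichotomy ((lor u v)^2) 1 with h | h | h
    · obtain ⟨Y, Z, hne, hYZ⟩ := fact_lt h
      have : Y ∈ (∅ : Set (Fin 3 → ℝ)) := by rw [← hE, hYZ]; exact Set.mem_insert _ _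
      simpa using this
    · obtain ⟨X, hS⟩ := fact_eq h
      have : X ∈ (∅ : Set (Fin 3 → ℝ)) := by rw [← hE, hS]; exact rfl
      simpa using this
    · exact h
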